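/- arXiv:1510.05072 — 8 statements merged into one kernel-verified Lean document; each statement's English description precedes it below -/
import Mathlib

section
/- Let F be a field, n a positive integer, and L = {(i₁, j₁)} a 1-step ladder on n (i.e., 1 ≤ i₁ ≤ n and 1 ≤ j₁ ≤ n). Then the ladder matrix space M_L is zero product determined as a Lie algebra under the commutator bracket [x,y] = xy - yx: for every F-vector space X and every bilinear map φ : M_L × M_L → X satisfying φ(x,y) = 0 whenever [x,y] = 0, there exists an F-linear map f : M_L → X such that φ(x,y) = f([x,y]) for all x, y ∈ M_L. -/
open Matrix TensorProduct

/-!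
The ladder space is the span `M` of the matrix units `e_ij` with `i ∈ R` and `j ∈ C` for a set of
rows `R` and a set of columns `C`. If `R` and `C` are disjoint, all products in `M` vanish and
`f = 0` works. Otherwise fix a pivot `p ∈ R ∩ C`. Vanishing on commuting pairs forces
`φ(e_ij, e_kl) = 0` unless `j = k` or `l = i`; testing it on the commuting pair
`(e_ik - e_ik', e_kl + e_k'l)` shows that `φ(e_ik, e_kl)` does not depend on `k` when `l ≠ i`; and
testing it on `(e_ij + e_jk + e_ki, e_ji + e_kj + e_ik)` gives the cocycle identity
`φ(e_ij, e_ji) + φ(e_jk, e_kj) + φ(e_ki, e_ik) = 0`. Together these show that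
`φ(x, y) = f [x, y]` on pairs of matrix units, hence everywhere, for the linear map `f` with
`f e_il = φ(e_ip, e_pl)`.
-/

/-- The ladder matrices on the 1-step ladder `L = {(i₁, j₁)}` on `n`:
the span of the matrix units `e_{i,j}` (1-based) with `1 ≤ i ≤ i₁` and `j₁ ≤ j ≤ n`. -/
def ladderModule (F : Type*) [Field F] (n i₁ j₁ : ℕ) :
    Submodule F (Matrix (Fin n) (Fin n) F) :=
  Submodule.span F
    { A | ∃ i j : Fin n, (i : ℕ) + 1 ≤ i₁ ∧ j₁ ≤ (j : ℕ) + 1 ∧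
      A = Matrix.single i j 1 }

section

variable {F ι X : Type*} [CommRing F] [AddCommGroup X] [Module F X]

section Commuting

variable {A : Type*} [Ring A] [Module F A] {M : Submodule F A}

def VanishesOnCommuting (φ : M →ₗ[F] M →ₗ[F] X) : Prop :=
  ∀ x y : M, (x : A) * y - y * x = 0 → φ x y = 0

namespace VanishesOnCommuting

variable {φ : M →ₗ[F] M →ₗ[F] X} (hφ : VanishesOnCommuting φ)
include hφ

lemma apply_self (x : M) : φ x x = 0 :=
  hφ x x (sub_self _)

lemma apply_swap (x y : M) : φ y x = -φ x y := by
  have h := hφ.apply_self (x + y)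
  simp only [map_add, LinearMap.add_apply, hφ.apply_self, zero_add, add_zero] at h
  exact eq_neg_of_add_eq_zero_left h

end VanishesOnCommuting

end Commuting

section RectMatrices

variable [DecidableEq ι]

variable (F) in
def rectMatrices (R C : Set ι) : Submodule F (Matrix ι ι F) :=
  Submodule.span F {A | ∃ i j, i ∈ R ∧ j ∈ C ∧ A = single i j 1}

namespace rectMatrices

variable {R C : Set ι} {i j k l p : ι}

def matrixUnit (hi : i ∈ R) (hj : j ∈ C) : rectMatrices F R C :=
  ⟨single i j 1, Submodule.subset_span ⟨i, j, hi, hj, rfl⟩⟩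

@[simp]
lemma coe_matrixUnit (hi : i ∈ R) (hj : j ∈ C) :
    ((matrixUnit hi hj : rectMatrices F R C) : Matrix ι ι F) = single i j 1 :=
  rfl

lemma bilinMap_ext {B B' : rectMatrices F R C →ₗ[F] rectMatrices F R C →ₗ[F] X}
    (h : ∀ (i j k l : ι) (hi : i ∈ R) (hj : j ∈ C) (hk : k ∈ R) (hl : l ∈ C),
      B (matrixUnit hi hj) (matrixUnit hk hl) = B' (matrixUnit hi hj) (matrixUnit hk hl)) :
    B = B' := by
  refine LinearMap.ext_on Submodule.span_span_coe_preimage fun x hx =>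
    LinearMap.ext_on Submodule.span_span_coe_preimage fun y hy => ?_
  obtain ⟨i, j, hi, hj, hx⟩ := hx
  obtain ⟨k, l, hk, hl, hy⟩ := hy
  obtain rfl : x = matrixUnit hi hj := Subtype.ext hx
  obtain rfl : y = matrixUnit hk hl := Subtype.ext hy
  exact h i j k l hi hj hk hl

variable [Fintype ι]

lemma mul_eq_zero_of_disjoint (hRC : Disjoint R C) (x y : rectMatrices F R C) :
    (x : Matrix ι ι F) * y = 0 := by
  have h : (LinearMap.mul F (Matrix ι ι F)).compl₁₂ (rectMatrices F R C).subtype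
      (rectMatrices F R C).subtype = 0 :=
    bilinMap_ext fun i j k l hi hj hk hl => by
      simp [(hRC.ne_of_mem hk hj).symm]
  exact LinearMap.congr_fun₂ h x y

variable {φ : rectMatrices F R C →ₗ[F] rectMatrices F R C →ₗ[F] X}

-- `[e_ip, e_pl] = e_il` for `i ≠ l`, so this is the only possible value of `f e_il`.
variable (φ) in
open Classical in
noncomputable def pivotFunctional (hpR : p ∈ R) (hpC : p ∈ C) : Matrix ι ι F →ₗ[F] X :=
  (stdBasis F ι ι).constr F fun il =>
    if h : il.1 ∈ R ∧ il.2 ∈ C then φ (matrixUnit h.1 hpC) (matrixUnit hpR h.2) else 0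

lemma pivotFunctional_single (hpR : p ∈ R) (hpC : p ∈ C) (hi : i ∈ R) (hl : l ∈ C) :
    pivotFunctional φ hpR hpC (single i l 1) = φ (matrixUnit hi hpC) (matrixUnit hpR hl) := by
  rw [pivotFunctional, ← stdBasis_eq_single, Module.Basis.constr_basis, dif_pos ⟨hi, hl⟩]

variable (hφ : VanishesOnCommuting φ)
include hφ

lemma apply_matrixUnit_eq_zero (hi : i ∈ R) (hj : j ∈ C) (hk : k ∈ R) (hl : l ∈ C)
    (hjk : j ≠ k) (hli : l ≠ i) : φ (matrixUnit hi hj) (matrixUnit hk hl) = 0 :=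
  hφ _ _ (by simp [hjk, hli])

lemma apply_matrixUnit_chain_eq (hi : i ∈ R) (hl : l ∈ C) (hli : l ≠ i)
    (hkR : k ∈ R) (hkC : k ∈ C) (hpR : p ∈ R) (hpC : p ∈ C) :
    φ (matrixUnit hi hkC) (matrixUnit hkR hl) = φ (matrixUnit hi hpC) (matrixUnit hpR hl) := by
  obtain rfl | hkp := eq_or_ne k p
  · rfl
  have h := hφ (matrixUnit hi hkC - matrixUnit hi hpC) (matrixUnit hkR hl + matrixUnit hpR hl)
    (by simp [sub_mul, mul_sub, add_mul, mul_add, hkp, hkp.symm, hli])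
  simp only [map_sub, map_add, LinearMap.sub_apply, apply_matrixUnit_eq_zero hφ _ _ _ _ hkp hli,
    apply_matrixUnit_eq_zero hφ _ _ _ _ hkp.symm hli, sub_zero, zero_sub, ← sub_eq_add_neg] at h
  exact sub_eq_zero.mp h

lemma apply_matrixUnit_cocycle (hiR : i ∈ R) (hiC : i ∈ C) (hjR : j ∈ R) (hjC : j ∈ C)
    (hkR : k ∈ R) (hkC : k ∈ C) (hij : i ≠ j) (hjk : j ≠ k) (hki : k ≠ i) :
    φ (matrixUnit hiR hjC) (matrixUnit hjR hiC) + φ (matrixUnit hjR hkC) (matrixUnit hkR hjC)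
      + φ (matrixUnit hkR hiC) (matrixUnit hiR hkC) = 0 := by
  have h := hφ (matrixUnit hiR hjC + matrixUnit hjR hkC + matrixUnit hkR hiC)
    (matrixUnit hjR hiC + matrixUnit hkR hjC + matrixUnit hiR hkC)
    (by
      simp only [Submodule.coe_add, coe_matrixUnit, mul_add, add_mul, single_mul_single_same,
        mul_one, single_mul_single_of_ne, ne_eq, not_false_eq_true, add_zero, zero_add,
        hij, hjk, hki, hij.symm, hjk.symm, hki.symm]
      abel)
  simp only [map_add, LinearMap.add_apply,
    apply_matrixUnit_eq_zero hφ _ _ _ _ hjk hij.symm,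
    apply_matrixUnit_eq_zero hφ _ _ _ _ hij.symm hki,
    apply_matrixUnit_eq_zero hφ _ _ _ _ hjk.symm hij,
    apply_matrixUnit_eq_zero hφ _ _ _ _ hki hjk.symm,
    apply_matrixUnit_eq_zero hφ _ _ _ _ hij hki.symm,
    apply_matrixUnit_eq_zero hφ _ _ _ _ hki.symm hjk, add_zero, zero_add] at h
  exact h

lemma apply_matrixUnit_transpose (hiR : i ∈ R) (hiC : i ∈ C) (hjR : j ∈ R) (hjC : j ∈ C)
    (hpR : p ∈ R) (hpC : p ∈ C) :
    φ (matrixUnit hiR hjC) (matrixUnit hjR hiC) =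
      φ (matrixUnit hiR hpC) (matrixUnit hpR hiC)
        - φ (matrixUnit hjR hpC) (matrixUnit hpR hjC) := by
  obtain rfl | hij := eq_or_ne i j
  · rw [hφ.apply_self, sub_self]
  obtain rfl | hjp := eq_or_ne j p
  · rw [hφ.apply_self, sub_zero]
  obtain rfl | hpi := eq_or_ne i p
  · rw [hφ.apply_self, zero_sub, hφ.apply_swap]
  have h := apply_matrixUnit_cocycle hφ hiR hiC hjR hjC hpR hpC hij hjp hpi.symm
  rw [hφ.apply_swap (matrixUnit hiR hpC)] at h
  linear_combination (norm := module) h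

lemma apply_matrixUnit_eq_pivotFunctional (hpR : p ∈ R) (hpC : p ∈ C)
    (hi : i ∈ R) (hj : j ∈ C) (hk : k ∈ R) (hl : l ∈ C) :
    φ (matrixUnit hi hj) (matrixUnit hk hl) =
      pivotFunctional φ hpR hpC (single i j 1 * single k l 1 - single k l 1 * single i j 1) := by
  obtain rfl | hjk := eq_or_ne j k <;> obtain rfl | hli := eq_or_ne l i
  · simp only [single_mul_single_same, mul_one, map_sub, pivotFunctional_single hpR hpC hi hl,
      pivotFunctional_single hpR hpC hk hj]
    exact apply_matrixUnit_transpose hφ hi hl hk hj hpR hpC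
  · rw [single_mul_single_same, single_mul_single_of_ne (h := hli), sub_zero, mul_one,
      pivotFunctional_single hpR hpC hi hl]
    exact apply_matrixUnit_chain_eq hφ hi hl hli hk hj hpR hpC
  · rw [single_mul_single_same, single_mul_single_of_ne (h := hjk), zero_sub, mul_one, map_neg,
      pivotFunctional_single hpR hpC hk hj, hφ.apply_swap]
    exact congrArg Neg.neg (apply_matrixUnit_chain_eq hφ hk hj hjk hi hl hpR hpC)
  · rw [single_mul_single_of_ne (h := hjk), single_mul_single_of_ne (h := hli), sub_zero, map_zero]
    exact apply_matrixUnit_eq_zero hφ hi hj hk hl hjk hli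

lemma apply_eq_pivotFunctional (hpR : p ∈ R) (hpC : p ∈ C) (x y : rectMatrices F R C) :
    φ x y = pivotFunctional φ hpR hpC ((x : Matrix ι ι F) * y - y * x) := by
  let bracket := LinearMap.mul F (Matrix ι ι F) - (LinearMap.mul F (Matrix ι ι F)).flip
  have h : φ = (bracket.compr₂ (pivotFunctional φ hpR hpC)).compl₁₂ (rectMatrices F R C).subtype
      (rectMatrices F R C).subtype :=
    bilinMap_ext fun i j k l hi hj hk hl =>
      apply_matrixUnit_eq_pivotFunctional hφ hpR hpC hi hj hk hl
  exact LinearMap.congr_fun₂ h x y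

theorem exists_linearMap_of_vanishesOnCommuting :
    ∃ f : rectMatrices F R C →ₗ[F] X, ∀ x y z : rectMatrices F R C,
      (z : Matrix ι ι F) = x * y - y * x → φ x y = f z := by
  by_cases hRC : ∃ p, p ∈ R ∧ p ∈ C
  · obtain ⟨p, hpR, hpC⟩ := hRC
    refine ⟨pivotFunctional φ hpR hpC ∘ₗ Submodule.subtype _, fun x y z hz => ?_⟩
    rw [LinearMap.comp_apply, Submodule.subtype_apply, hz]
    exact apply_eq_pivotFunctional hφ hpR hpC x y
  · have hdisj : Disjoint R C := Set.disjoint_left.2 fun p hR hC => hRC ⟨p, hR, hC⟩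
    refine ⟨0, fun x y _ _ => hφ x y ?_⟩
    rw [mul_eq_zero_of_disjoint hdisj, mul_eq_zero_of_disjoint hdisj, sub_zero]

end rectMatrices

end RectMatrices

end

theorem ladderModule_zero_product_determined_lie_general
    (F : Type*) [Field F] (n i₁ j₁ : ℕ)
    (X : Type*) [AddCommGroup X] [Module F X]
    (φ : ladderModule F n i₁ j₁ →ₗ[F] ladderModule F n i₁ j₁ →ₗ[F] X)
    (hφ : ∀ x y : ladderModule F n i₁ j₁,
      ((x : Matrix (Fin n) (Fin n) F) * y - (y : Matrix (Fin n) (Fin n) F) * x = 0) →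
        φ x y = 0) :
    ∃ f : ladderModule F n i₁ j₁ →ₗ[F] X,
      ∀ x y z : ladderModule F n i₁ j₁,
        (z : Matrix (Fin n) (Fin n) F) =
            (x : Matrix (Fin n) (Fin n) F) * y - (y : Matrix (Fin n) (Fin n) F) * x →
          φ x y = f z :=
  rectMatrices.exists_linearMap_of_vanishesOnCommuting
    (R := {i : Fin n | (i : ℕ) + 1 ≤ i₁}) (C := {j : Fin n | j₁ ≤ (j : ℕ) + 1}) hφ

/-- The matrix Lie algebra on a one-step ladder is zero product determined
under the commutator bracket. -/
theorem ladderModule_zero_product_determined_lie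
    (F : Type*) [Field F] (n i₁ j₁ : ℕ) (hn : 1 ≤ n)
    (hi₁ : 1 ≤ i₁) (hi₁n : i₁ ≤ n) (hj₁ : 1 ≤ j₁) (hj₁n : j₁ ≤ n)
    (X : Type*) [AddCommGroup X] [Module F X]
    (φ : ladderModule F n i₁ j₁ →ₗ[F] ladderModule F n i₁ j₁ →ₗ[F] X)
    (hφ : ∀ x y : ladderModule F n i₁ j₁,
      ((x : Matrix (Fin n) (Fin n) F) * y - (y : Matrix (Fin n) (Fin n) F) * x = 0) →
        φ x y = 0) :
    ∃ f : ladderModule F n i₁ j₁ →ₗ[F] X,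
      ∀ x y z : ladderModule F n i₁ j₁,
        (z : Matrix (Fin n) (Fin n) F) =
            (x : Matrix (Fin n) (Fin n) F) * y - (y : Matrix (Fin n) (Fin n) F) * x →
          φ x y = f z :=
  ladderModule_zero_product_determined_lie_general F n i₁ j₁ X φ hφ
end

section
/- Let F be a field, n a positive integer, and L = {(i₁, j₁)} a 1-step ladder on n. Let μ : M_L ⊗_F M_L → M_L be the linear map induced by the bilinear map (x,y) ↦ [x,y] = xy - yx. Then the kernel of μ is spanned by the rank-one tensors it contains, i.e., Ker μ = span{ x ⊗ y : x, y ∈ M_L, [x,y] = 0 }. -/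
open Matrix TensorProduct

/-!
A 1-step ladder is a rectangle `I × J` of matrix positions, and the result holds for every
rectangle. Write `K` for the span of the commuting rank-one tensors. Modulo `K`, tensors are
antisymmetric (expand `(x + y) ⊗ (x + y)`) and `e_ab ⊗ e_cd` vanishes unless `b = c` or `d = a`.
If `I ∩ J` is empty, every product of two matrix units of the rectangle vanishes and `K` is
everything. Otherwise fix `b₀ ∈ I ∩ J`: then `σ(e_pq) = e_pb₀ ⊗ e_b₀q` is a linear section of
the bracket map `μ` modulo `K`, i.e. `u ≡ σ (μ u) (mod K)` for every tensor `u`, so `ker μ ⊆ K`.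
On matrix units this needs two relations: `e_pq ⊗ e_qr ≡ e_pq' ⊗ e_q'r` for `r ≠ p`, because
`e_pq - e_pq'` commutes with `e_qr + e_q'r`; and `e_ab ⊗ e_ba + e_bc ⊗ e_cb + e_ca ⊗ e_ac ≡ 0`,
read off from the commuting permutation matrices of the 3-cycle `(a b c)` and of its inverse.
-/

theorem TensorProduct.ext_on {R M N P : Type*} [CommSemiring R] [AddCommMonoid M]
    [AddCommMonoid N] [AddCommMonoid P] [Module R M] [Module R N] [Module R P]
    {s : Set M} {t : Set N} (hs : Submodule.span R s = ⊤) (ht : Submodule.span R t = ⊤)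
    {f g : M ⊗[R] N →ₗ[R] P} (h : ∀ x ∈ s, ∀ y ∈ t, f (x ⊗ₜ y) = g (x ⊗ₜ y)) : f = g :=
  TensorProduct.ext <| LinearMap.ext_on hs fun x hx => LinearMap.ext_on ht fun y hy => h x hx y hy

theorem TensorProduct.ker_le_of_mkQ_tmul_eq {R M N P : Type*} [CommRing R] [AddCommGroup M]
    [AddCommGroup N] [AddCommGroup P] [Module R M] [Module R N] [Module R P]
    {s : Set M} {t : Set N} (hs : Submodule.span R s = ⊤) (ht : Submodule.span R t = ⊤)
    (K : Submodule R (M ⊗[R] N)) (μ : M ⊗[R] N →ₗ[R] P) (σ : P →ₗ[R] M ⊗[R] N)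
    (h : ∀ x ∈ s, ∀ y ∈ t, K.mkQ (x ⊗ₜ y) = K.mkQ (σ (μ (x ⊗ₜ y)))) :
    LinearMap.ker μ ≤ K := by
  have hK : K.mkQ = (K.mkQ ∘ₗ σ) ∘ₗ μ := TensorProduct.ext_on hs ht h
  calc LinearMap.ker μ ≤ LinearMap.ker ((K.mkQ ∘ₗ σ) ∘ₗ μ) := LinearMap.ker_le_ker_comp _ _
    _ = K := by rw [← hK, Submodule.ker_mkQ]

def commutingTensors {R A : Type*} [CommRing R] [Ring A] [Module R A] (V : Submodule R A) :
    Submodule R (V ⊗[R] V) :=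
  Submodule.span R {t | ∃ x y : V, (x : A) * y - y * x = 0 ∧ t = x ⊗ₜ y}

local notation "⟦" t "⟧ₖ" => Submodule.mkQ (commutingTensors _) t

section CommutingTensors

variable {R A : Type*} [CommRing R] [Ring A] [Module R A] {V : Submodule R A}

theorem mkQ_tmul_eq_zero_of_commute {x y : V} (h : Commute (x : A) y) : ⟦x ⊗ₜ y⟧ₖ = 0 :=
  (Submodule.Quotient.mk_eq_zero _).2 (Submodule.subset_span ⟨x, y, sub_eq_zero.2 h.eq, rfl⟩)

theorem mkQ_tmul_comm (x y : V) : ⟦y ⊗ₜ x⟧ₖ = -⟦x ⊗ₜ y⟧ₖ := by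
  have h := mkQ_tmul_eq_zero_of_commute (Commute.refl ((x + y : V) : A))
  rw [add_tmul, tmul_add, tmul_add, map_add, map_add, map_add,
    mkQ_tmul_eq_zero_of_commute (Commute.refl (x : A)),
    mkQ_tmul_eq_zero_of_commute (Commute.refl (y : A))] at h
  linear_combination (norm := module) h

theorem commutingTensors_le_ker (μ : V ⊗[R] V →ₗ[R] V)
    (hμ : ∀ x y : V, (μ (x ⊗ₜ y) : A) = x * y - y * x) : commutingTensors V ≤ LinearMap.ker μ :=
  Submodule.span_le.2 <| by
    rintro _ ⟨x, y, h, rfl⟩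
    exact Subtype.ext ((hμ x y).trans h)

end CommutingTensors

theorem Matrix.commute_single_single_of_ne {ι α : Type*} [Fintype ι] [DecidableEq ι]
    [Semiring α] {i j k l : ι} (hjk : j ≠ k) (hli : l ≠ i) (c d : α) :
    Commute (single i j c) (single k l d) := by
  simp [Commute, SemiconjBy, hjk, hli]

section Rectangle

variable {ι R : Type*} [DecidableEq ι] [CommRing R] {I J : Set ι}

variable (R) in
def rectangleSubmodule (I J : Set ι) : Submodule R (Matrix ι ι R) :=
  Submodule.span R {A | ∃ i j, i ∈ I ∧ j ∈ J ∧ A = single i j 1}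

variable (R I J) in
open Classical in
noncomputable def rectangleUnit (p q : ι) : rectangleSubmodule R I J :=
  if h : p ∈ I ∧ q ∈ J then ⟨single p q 1, Submodule.subset_span ⟨p, q, h.1, h.2, rfl⟩⟩ else 0

local notation "E" => rectangleUnit R I J

theorem coe_rectangleUnit {p q : ι} (hp : p ∈ I) (hq : q ∈ J) :
    (E p q : Matrix ι ι R) = single p q 1 := by
  simp [rectangleUnit, hp, hq]

theorem span_rectangleUnit :
    Submodule.span R {x | ∃ a ∈ I, ∃ b ∈ J, E a b = x} = ⊤ := by
  refine eq_top_iff.2 (Submodule.span_span_coe_preimage.symm.le.trans (Submodule.span_mono ?_))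
  rintro x ⟨a, b, ha, hb, hx⟩
  exact ⟨a, ha, b, hb, Subtype.ext ((coe_rectangleUnit ha hb).trans hx.symm)⟩

variable [Fintype ι]

variable (R I J) in
noncomputable def bracketLift (b : ι) :
    Matrix ι ι R →ₗ[R] rectangleSubmodule R I J ⊗[R] rectangleSubmodule R I J :=
  ∑ p, ∑ q, (entryLinearMap R R p q).smulRight (E p b ⊗ₜ E b q)

theorem bracketLift_single (b p q : ι) :
    bracketLift R I J b (single p q 1) = E p b ⊗ₜ E b q := by
  simp [bracketLift, LinearMap.sum_apply, single_apply, ite_and]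

theorem mkQ_rectangleUnit_tmul_eq_zero {a b c d : ι} (hbc : b ≠ c) (hda : d ≠ a) :
    ⟦E a b ⊗ₜ E c d⟧ₖ = 0 := by
  refine mkQ_tmul_eq_zero_of_commute ?_
  unfold rectangleUnit
  split_ifs <;> simp [commute_single_single_of_ne hbc hda]

theorem mkQ_rectangleUnit_tmul_eq_of_mem_inter {p q q' r : ι} (hp : p ∈ I) (hq : q ∈ I ∩ J)
    (hq' : q' ∈ I ∩ J) (hr : r ∈ J) (hrp : r ≠ p) :
    ⟦E p q ⊗ₜ E q r⟧ₖ = ⟦E p q' ⊗ₜ E q' r⟧ₖ := by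
  rcases eq_or_ne q q' with rfl | hqq'
  · rfl
  have h : Commute ((E p q - E p q' : rectangleSubmodule R I J) : Matrix ι ι R)
      ((E q r + E q' r : rectangleSubmodule R I J) : Matrix ι ι R) := by
    simp only [Submodule.coe_sub, Submodule.coe_add, coe_rectangleUnit hp hq.2,
      coe_rectangleUnit hp hq'.2, coe_rectangleUnit hq.1 hr, coe_rectangleUnit hq'.1 hr]
    simp [Commute, SemiconjBy, sub_mul, mul_add, add_mul, mul_sub, hqq', hqq'.symm, hrp]
  have h := mkQ_tmul_eq_zero_of_commute h
  rw [sub_tmul, tmul_add, tmul_add, map_sub, map_add, map_add,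
    mkQ_rectangleUnit_tmul_eq_zero hqq' hrp, mkQ_rectangleUnit_tmul_eq_zero hqq'.symm hrp] at h
  linear_combination (norm := module) h

theorem mkQ_rectangleUnit_cycle_sum_eq_zero {a b c : ι} (ha : a ∈ I ∩ J) (hb : b ∈ I ∩ J)
    (hc : c ∈ I ∩ J) :
    ⟦E a b ⊗ₜ E b a⟧ₖ + ⟦E b c ⊗ₜ E c b⟧ₖ + ⟦E c a ⊗ₜ E a c⟧ₖ = 0 := by
  rcases eq_or_ne a b with rfl | hab
  · rw [mkQ_tmul_eq_zero_of_commute (Commute.refl _), mkQ_tmul_comm (E c a)]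
    abel
  rcases eq_or_ne b c with rfl | hbc
  · rw [mkQ_tmul_eq_zero_of_commute (Commute.refl (E b b : Matrix ι ι R)), mkQ_tmul_comm (E a b)]
    abel
  rcases eq_or_ne c a with rfl | hca
  · rw [mkQ_tmul_eq_zero_of_commute (Commute.refl (E c c : Matrix ι ι R)), mkQ_tmul_comm (E c b)]
    abel
  have h : Commute ((E a b + E b c + E c a : rectangleSubmodule R I J) : Matrix ι ι R)
      ((E b a + E c b + E a c : rectangleSubmodule R I J) : Matrix ι ι R) := by
    simp only [Submodule.coe_add, coe_rectangleUnit ha.1 hb.2, coe_rectangleUnit hb.1 hc.2,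
      coe_rectangleUnit hc.1 ha.2, coe_rectangleUnit hb.1 ha.2, coe_rectangleUnit hc.1 hb.2,
      coe_rectangleUnit ha.1 hc.2, Commute, SemiconjBy, mul_add, add_mul, mul_one,
      single_mul_single_same, single_mul_single_of_ne, ne_eq, hab, hbc, hca, hab.symm, hbc.symm,
      hca.symm, not_false_eq_true, add_zero, zero_add]
    abel
  have h := mkQ_tmul_eq_zero_of_commute h
  simp only [add_tmul, tmul_add, map_add, mkQ_rectangleUnit_tmul_eq_zero, hab, hbc, hca,
    hab.symm, hbc.symm, hca.symm, ne_eq, not_false_eq_true, add_zero, zero_add] at h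
  linear_combination (norm := module) h

theorem mkQ_rectangleUnit_tmul_eq_mkQ_bracketLift {a b c d b₀ : ι} (ha : a ∈ I) (hb : b ∈ J)
    (hc : c ∈ I) (hd : d ∈ J) (hb₀ : b₀ ∈ I ∩ J) :
    ⟦E a b ⊗ₜ E c d⟧ₖ = ⟦bracketLift R I J b₀
      (single a b 1 * single c d 1 - single c d 1 * single a b 1)⟧ₖ := by
  rcases eq_or_ne b c with rfl | hbc <;> rcases eq_or_ne a d with rfl | had
  · have hcycle := mkQ_rectangleUnit_cycle_sum_eq_zero (R := R) ⟨ha, hd⟩ ⟨hc, hb⟩ hb₀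
    rw [mkQ_tmul_comm (E a b₀)] at hcycle
    rw [single_mul_single_same, single_mul_single_same, mul_one, map_sub, bracketLift_single,
      bracketLift_single, map_sub]
    linear_combination (norm := module) hcycle
  · rw [single_mul_single_same, single_mul_single_of_ne (h := had.symm), sub_zero, mul_one,
      bracketLift_single]
    exact mkQ_rectangleUnit_tmul_eq_of_mem_inter ha ⟨hc, hb⟩ hb₀ hd had.symm
  · rw [single_mul_single_of_ne (h := hbc), single_mul_single_same, zero_sub, mul_one, map_neg,
      bracketLift_single, map_neg, mkQ_tmul_comm (E c a),
      mkQ_rectangleUnit_tmul_eq_of_mem_inter hc ⟨ha, hd⟩ hb₀ hb hbc]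
  · rw [single_mul_single_of_ne (h := hbc), single_mul_single_of_ne (h := had.symm), sub_zero,
      map_zero, map_zero]
    exact mkQ_rectangleUnit_tmul_eq_zero hbc had.symm

theorem ker_bracket_rectangleSubmodule_eq_commutingTensors
    (μ : rectangleSubmodule R I J ⊗[R] rectangleSubmodule R I J →ₗ[R] rectangleSubmodule R I J)
    (hμ : ∀ x y : rectangleSubmodule R I J, (μ (x ⊗ₜ y) : Matrix ι ι R) = x * y - y * x) :
    LinearMap.ker μ = commutingTensors (rectangleSubmodule R I J) := by
  refine le_antisymm ?_ (commutingTensors_le_ker μ hμ)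
  obtain ⟨σ, hσ⟩ : ∃ σ : Matrix ι ι R →ₗ[R] rectangleSubmodule R I J ⊗[R] rectangleSubmodule R I J,
      ∀ a ∈ I, ∀ b ∈ J, ∀ c ∈ I, ∀ d ∈ J,
        ⟦E a b ⊗ₜ E c d⟧ₖ = ⟦σ (single a b 1 * single c d 1 - single c d 1 * single a b 1)⟧ₖ := by
    rcases Set.disjoint_or_nonempty_inter I J with hIJ | ⟨b₀, hb₀⟩
    · refine ⟨0, fun a ha b hb c hc d hd => ?_⟩
      rw [LinearMap.zero_apply, map_zero]
      exact mkQ_rectangleUnit_tmul_eq_zero (hIJ.ne_of_mem hc hb).symm (hIJ.ne_of_mem ha hd).symm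
    · exact ⟨bracketLift R I J b₀, fun a ha b hb c hc d hd =>
        mkQ_rectangleUnit_tmul_eq_mkQ_bracketLift ha hb hc hd hb₀⟩
  refine TensorProduct.ker_le_of_mkQ_tmul_eq span_rectangleUnit span_rectangleUnit _ μ
    (σ ∘ₗ (rectangleSubmodule R I J).subtype) ?_
  rintro _ ⟨a, ha, b, hb, rfl⟩ _ ⟨c, hc, d, hd, rfl⟩
  rw [LinearMap.comp_apply, Submodule.subtype_apply, hμ, coe_rectangleUnit ha hb,
    coe_rectangleUnit hc hd]
  exact hσ a ha b hb c hc d hd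

end Rectangle

theorem ker_bracket_ladderModule_spanned_by_rank_one_general
    (F : Type*) [Field F] (n i₁ j₁ : ℕ)
    (μ : ladderModule F n i₁ j₁ ⊗[F] ladderModule F n i₁ j₁ →ₗ[F] ladderModule F n i₁ j₁)
    (hμ : ∀ x y : ladderModule F n i₁ j₁,
      ((μ (x ⊗ₜ y) : Matrix (Fin n) (Fin n) F)) =
        (x : Matrix (Fin n) (Fin n) F) * y - (y : Matrix (Fin n) (Fin n) F) * x) :
    LinearMap.ker μ = Submodule.span F
      { t | ∃ x y : ladderModule F n i₁ j₁,
        ((x : Matrix (Fin n) (Fin n) F) * y - (y : Matrix (Fin n) (Fin n) F) * x = 0) ∧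
        t = x ⊗ₜ y } :=
  ker_bracket_rectangleSubmodule_eq_commutingTensors μ hμ

/-- The kernel of the linear map `μ : M_L ⊗ M_L → M_L` induced by the commutator
bracket is spanned by the rank-one tensors it contains. -/
theorem ker_bracket_ladderModule_spanned_by_rank_one
    (F : Type*) [Field F] (n i₁ j₁ : ℕ) (hn : 1 ≤ n)
    (hi₁ : 1 ≤ i₁) (hi₁n : i₁ ≤ n) (hj₁ : 1 ≤ j₁) (hj₁n : j₁ ≤ n)
    (μ : ladderModule F n i₁ j₁ ⊗[F] ladderModule F n i₁ j₁ →ₗ[F] ladderModule F n i₁ j₁)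
    (hμ : ∀ x y : ladderModule F n i₁ j₁,
      ((μ (x ⊗ₜ y) : Matrix (Fin n) (Fin n) F)) =
        (x : Matrix (Fin n) (Fin n) F) * y - (y : Matrix (Fin n) (Fin n) F) * x) :
    LinearMap.ker μ = Submodule.span F
      { t | ∃ x y : ladderModule F n i₁ j₁,
        ((x : Matrix (Fin n) (Fin n) F) * y - (y : Matrix (Fin n) (Fin n) F) * x = 0) ∧
        t = x ⊗ₜ y } :=
  ker_bracket_ladderModule_spanned_by_rank_one_general F n i₁ j₁ μ hμ
end

section
/- Let F be a field, n a positive integer, and L a k-step ladder on n. Then M_L is closed under matrix multiplication (i.e., x, y ∈ M_L implies xy ∈ M_L) if and only if L is upper triangular. Consequently, when L is upper triangular, M_L is also closed under the commutator bracket [x,y] = xy - yx. -/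
/-!
`M_L` is the span of the matrix units `e_{i,j}` whose position lies in the ladder pattern, so a
matrix belongs to `M_L` iff it vanishes off the pattern. Since `e_{a,b} e_{b,c} = e_{a,c}`, such a
span is closed under multiplication iff the pattern is a transitive relation. A ladder pattern is
transitive iff the ladder is upper triangular: if `j_t ≤ i_s` for some `s < t`, then
`(i_t, j_t)` and `(j_t, j_s)` lie in the pattern but `(i_t, j_s)` does not, while conversely a
failure of transitivity through steps `t < s` would force `j_{t+1} ≤ j_s ≤ i_t`.
-/

open Matrix

/-- The ladder matrices on the `k`-step ladder with steps `(ii t, jj t)` on `n`: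
the span of the matrix units `e_{i,j}` (1-based) with `1 ≤ i ≤ ii t` and
`jj t ≤ j ≤ n` for some step `t`. -/
def ladderModuleK (F : Type*) [Field F] (n k : ℕ) (ii jj : Fin k → ℕ) :
    Submodule F (Matrix (Fin n) (Fin n) F) :=
  Submodule.span F
    { A | ∃ t : Fin k, ∃ i j : Fin n, (i : ℕ) + 1 ≤ ii t ∧ jj t ≤ (j : ℕ) + 1 ∧
      A = Matrix.single i j 1 }

namespace Matrix

section Pattern

variable {ι : Type*} [DecidableEq ι]

def patternSubmodule (F : Type*) [Semiring F] (R : ι → ι → Prop) :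
    Submodule F (Matrix ι ι F) :=
  Submodule.span F {A | ∃ i j, R i j ∧ A = single i j 1}

variable [Fintype ι] {F : Type*} {R : ι → ι → Prop}

theorem mem_patternSubmodule_iff [Semiring F] {A : Matrix ι ι F} :
    A ∈ patternSubmodule F R ↔ ∀ i j, ¬R i j → A i j = 0 := by
  constructor
  · intro hA i j hij
    induction hA using Submodule.span_induction with
    | mem B hB =>
      obtain ⟨a, b, hab, rfl⟩ := hB
      rw [single_apply_of_ne]
      rintro ⟨rfl, rfl⟩
      exact hij hab
    | zero => rfl
    | add B C _ _ hB hC => simp [hB, hC]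
    | smul c B _ hB => simp [hB]
  · intro hA
    rw [matrix_eq_sum_single A]
    refine Submodule.sum_mem _ fun i _ => Submodule.sum_mem _ fun j _ => ?_
    by_cases hij : R i j
    · have hunit : single i j (A i j) = A i j • single i j (1 : F) := by
        rw [smul_single, smul_eq_mul, mul_one]
      exact hunit ▸ Submodule.smul_mem _ _ (Submodule.subset_span ⟨i, j, hij, rfl⟩)
    · simp [hA i j hij]

theorem mul_mem_patternSubmodule [Semiring F] [IsTrans ι R] {A B : Matrix ι ι F}
    (hA : A ∈ patternSubmodule F R) (hB : B ∈ patternSubmodule F R) :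
    A * B ∈ patternSubmodule F R := by
  rw [mem_patternSubmodule_iff] at *
  intro i j hij
  rw [mul_apply]
  refine Finset.sum_eq_zero fun c _ => ?_
  by_cases hic : R i c
  · rw [hB c j fun hcj => hij (_root_.trans hic hcj), mul_zero]
  · rw [hA i c hic, zero_mul]

theorem mul_mem_patternSubmodule_iff [Semiring F] [Nontrivial F] :
    (∀ A ∈ patternSubmodule F R, ∀ B ∈ patternSubmodule F R, A * B ∈ patternSubmodule F R) ↔
      IsTrans ι R := by
  refine ⟨fun hmul => ⟨fun a b c hab hbc => ?_⟩, fun _ _ hA _ hB => mul_mem_patternSubmodule hA hB⟩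
  have hac := hmul _ (Submodule.subset_span ⟨a, b, hab, rfl⟩) _
    (Submodule.subset_span ⟨b, c, hbc, rfl⟩)
  rw [single_mul_single_same, one_mul, mem_patternSubmodule_iff] at hac
  by_contra h
  simpa using hac a c h

end Pattern

end Matrix

section Ladder

variable {n k : ℕ} {ii jj : Fin k → ℕ}

/-- Positions `i j : Fin n` are 0-based, while the steps `ii t`, `jj t` are 1-based. -/
def ladderPattern (ii jj : Fin k → ℕ) (i j : Fin n) : Prop :=
  ∃ t, (i : ℕ) + 1 ≤ ii t ∧ jj t ≤ (j : ℕ) + 1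

theorem ladderModuleK_eq_patternSubmodule (F : Type*) [Field F] :
    ladderModuleK F n k ii jj = patternSubmodule F (ladderPattern ii jj) := by
  unfold ladderModuleK patternSubmodule ladderPattern
  congr 1
  ext A
  exact ⟨fun ⟨t, i, j, hi, hj, hA⟩ => ⟨i, j, ⟨t, hi, hj⟩, hA⟩,
    fun ⟨i, j, ⟨t, hi, hj⟩, hA⟩ => ⟨t, i, j, hi, hj, hA⟩⟩

theorem isTrans_ladderPattern (hjj : Monotone jj)
    (hut : ∀ s t : Fin k, (s : ℕ) + 1 = t → ii s < jj t) :
    IsTrans (Fin n) (ladderPattern ii jj) := by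
  refine ⟨fun a b c ⟨s, has, hbs⟩ ⟨t, hbt, hct⟩ => ?_⟩
  rcases le_or_gt s t with hst | hts
  · exact ⟨s, has, (hjj hst).trans hct⟩
  · have hsucc : ii t < jj ⟨t + 1, by omega⟩ := hut t _ rfl
    have hle : jj ⟨t + 1, by omega⟩ ≤ jj s := hjj (Fin.mk_le_of_le_val hts)
    omega

theorem lt_of_isTrans_ladderPattern (hii : StrictMono ii) (hjj : StrictMono jj)
    (hiin : ∀ t, ii t ≤ n) (hjj1 : ∀ t, 1 ≤ jj t)
    (htrans : IsTrans (Fin n) (ladderPattern ii jj)) {s t : Fin k} (hst : s < t) :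
    ii s < jj t := by
  by_contra! hts
  have hiist : ii s < ii t := hii hst
  have hjjst : jj s < jj t := hjj hst
  have hiis := hiin s
  have hiit := hiin t
  have hjjs := hjj1 s
  let a : Fin n := ⟨ii t - 1, by omega⟩
  let b : Fin n := ⟨jj t - 1, by omega⟩
  let c : Fin n := ⟨jj s - 1, by omega⟩
  have hab : ladderPattern ii jj a b := ⟨t, by simp [a]; omega, by simp [b]; omega⟩
  have hbc : ladderPattern ii jj b c := ⟨s, by simp [b]; omega, by simp [c]; omega⟩
  obtain ⟨u, hau, hcu⟩ := _root_.trans hab hbc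
  simp only [a, c] at hau hcu
  have htu : t ≤ u := hii.le_iff_le.mp (by omega)
  have hus : u ≤ s := hjj.le_iff_le.mp (by omega)
  exact hst.not_ge (htu.trans hus)

theorem isTrans_ladderPattern_iff (hii : StrictMono ii) (hjj : StrictMono jj)
    (hiin : ∀ t, ii t ≤ n) (hjj1 : ∀ t, 1 ≤ jj t) :
    IsTrans (Fin n) (ladderPattern ii jj) ↔ ∀ s t : Fin k, (s : ℕ) + 1 = t → ii s < jj t :=
  ⟨fun htrans _ _ hst => lt_of_isTrans_ladderPattern hii hjj hiin hjj1 htrans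
      (Fin.lt_def.2 (by omega)),
    isTrans_ladderPattern hjj.monotone⟩

end Ladder

theorem ladderModuleK_mul_closed_iff_upper_triangular_general
    (F : Type*) [Field F] (n k : ℕ) (ii jj : Fin k → ℕ)
    (hiimono : StrictMono ii) (hjjmono : StrictMono jj)
    (hiin : ∀ t, ii t ≤ n)
    (hjj1 : ∀ t, 1 ≤ jj t) :
    ((∀ x ∈ ladderModuleK F n k ii jj, ∀ y ∈ ladderModuleK F n k ii jj,
        x * y ∈ ladderModuleK F n k ii jj)
      ↔ (∀ s t : Fin k, (s : ℕ) + 1 = (t : ℕ) → ii s < jj t))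
    ∧ ((∀ s t : Fin k, (s : ℕ) + 1 = (t : ℕ) → ii s < jj t) →
        ∀ x ∈ ladderModuleK F n k ii jj, ∀ y ∈ ladderModuleK F n k ii jj,
          x * y - y * x ∈ ladderModuleK F n k ii jj) := by
  rw [ladderModuleK_eq_patternSubmodule, mul_mem_patternSubmodule_iff,
    isTrans_ladderPattern_iff hiimono hjjmono hiin hjj1]
  refine ⟨Iff.rfl, fun hut x hx y hy => ?_⟩
  have : IsTrans (Fin n) (ladderPattern ii jj) := isTrans_ladderPattern hjjmono.monotone hut
  exact sub_mem (mul_mem_patternSubmodule hx hy) (mul_mem_patternSubmodule hy hx)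

/-- The ladder matrix space `M_L` of a `k`-step ladder `L` is closed under matrix
multiplication if and only if the ladder is upper triangular (`i_t < j_{t+1}` for
all consecutive steps); consequently, when `L` is upper triangular, `M_L` is also
closed under the commutator bracket. -/
theorem ladderModuleK_mul_closed_iff_upper_triangular
    (F : Type*) [Field F] (n k : ℕ) (hn : 1 ≤ n) (ii jj : Fin k → ℕ)
    (hiimono : StrictMono ii) (hjjmono : StrictMono jj)
    (hii1 : ∀ t, 1 ≤ ii t) (hiin : ∀ t, ii t ≤ n)
    (hjj1 : ∀ t, 1 ≤ jj t) (hjjn : ∀ t, jj t ≤ n) :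
    ((∀ x ∈ ladderModuleK F n k ii jj, ∀ y ∈ ladderModuleK F n k ii jj,
        x * y ∈ ladderModuleK F n k ii jj)
      ↔ (∀ s t : Fin k, (s : ℕ) + 1 = (t : ℕ) → ii s < jj t))
    ∧ ((∀ s t : Fin k, (s : ℕ) + 1 = (t : ℕ) → ii s < jj t) →
        ∀ x ∈ ladderModuleK F n k ii jj, ∀ y ∈ ladderModuleK F n k ii jj,
          x * y - y * x ∈ ladderModuleK F n k ii jj) :=
  ladderModuleK_mul_closed_iff_upper_triangular_general F n k ii jj hiimono hjjmono hiin hjj1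
end

section
/- Let F be a field and n a positive integer. The full matrix algebra M_n(F), considered as a Lie algebra under the commutator bracket [x,y] = xy - yx, is zero product determined: for every F-vector space X and every bilinear map φ : M_n(F) × M_n(F) → X satisfying φ(x,y) = 0 whenever [x,y] = 0, there exists an F-linear map f : M_n(F) → X such that φ(x,y) = f([x,y]) for all x, y ∈ M_n(F). -/
/-!
A bilinear map `φ` that vanishes on commuting pairs is alternating, and testing it on a few
commuting combinations of matrix units `E i j` shows that `φ (E i j) (E k l)` only depends on
`[E i j, E k l]`: for `i ≠ l` the value `φ (E i j) (E j l)` does not depend on the middle index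
`j`, and `φ (E i j) (E j i) = d i - d j` with `d i = φ (E i o) (E o i)` for a fixed index `o`.
Hence the linear map sending `E i j = E i o * E o j` to `φ (E i o) (E o j)` factors `φ`
through the commutator.
-/

open Matrix

theorem LinearMap.isAlt_of_commute_imp_eq_zero {R A M : Type*} [CommSemiring R] [Semiring A]
    [Module R A] [AddCommMonoid M] [Module R M] {φ : A →ₗ[R] A →ₗ[R] M}
    (hφ : ∀ x y, Commute x y → φ x y = 0) : φ.IsAlt :=
  fun z => hφ z z (Commute.refl z)

namespace Matrix

variable {R ι X : Type*} [CommRing R] [Fintype ι] [DecidableEq ι] [AddCommGroup X] [Module R X]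

theorem commute_single_single {i j k l : ι} (hjk : j ≠ k) (hli : l ≠ i) (a b : R) :
    Commute (single i j a) (single k l b) := by
  simp [Commute, SemiconjBy, hjk, hli]

variable {φ : Matrix ι ι R →ₗ[R] Matrix ι ι R →ₗ[R] X}

theorem apply_single_single_of_ne (hφ : ∀ x y, Commute x y → φ x y = 0) {i j k l : ι}
    (hjk : j ≠ k) (hli : l ≠ i) : φ (single i j 1) (single k l 1) = 0 :=
  hφ _ _ (commute_single_single hjk hli 1 1)

theorem apply_single_single_middle (hφ : ∀ x y, Commute x y → φ x y = 0) {i l : ι}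
    (hil : i ≠ l) (j k : ι) :
    φ (single i j 1) (single j l 1) = φ (single i k 1) (single k l 1) := by
  rcases eq_or_ne j k with rfl | hjk
  · rfl
  -- `E i j + E i k` and `E j l - E k l` multiply to zero in both orders.
  have hcomm : Commute (single i j (1 : R) + single i k 1) (single j l 1 - single k l 1) := by
    simp [Commute, SemiconjBy, add_mul, mul_add, mul_sub, sub_mul, hjk, hjk.symm, hil.symm]
  have h := hφ _ _ hcomm
  simp only [map_add, map_sub, LinearMap.add_apply, apply_single_single_of_ne hφ hjk hil.symm,
    apply_single_single_of_ne hφ hjk.symm hil.symm] at h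
  rwa [add_zero, zero_add, sub_eq_zero] at h

theorem apply_single_single_cyclic (hφ : ∀ x y, Commute x y → φ x y = 0) {i j k : ι}
    (hij : i ≠ j) (hjk : j ≠ k) (hki : k ≠ i) :
    φ (single i j 1) (single j i 1) + φ (single j k 1) (single k j 1) +
      φ (single k i 1) (single i k 1) = 0 := by
  -- The 3-cycle `E i j + E j k + E k i` commutes with its inverse.
  have hcomm : Commute (single i j (1 : R) + single j k 1 + single k i 1)
      (single j i 1 + single k j 1 + single i k 1) := by
    simp only [Commute, SemiconjBy, add_mul, mul_add]
    simp [hij, hjk, hki, hij.symm, hjk.symm, hki.symm]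
    abel
  have h := hφ _ _ hcomm
  simp only [map_add, LinearMap.add_apply] at h
  simpa [apply_single_single_of_ne hφ, hij, hjk, hki, hij.symm, hjk.symm, hki.symm] using h

theorem apply_single_single_transpose (hφ : ∀ x y, Commute x y → φ x y = 0) (i j o : ι) :
    φ (single i j 1) (single j i 1) =
      φ (single i o 1) (single o i 1) - φ (single j o 1) (single o j 1) := by
  have hAlt := LinearMap.isAlt_of_commute_imp_eq_zero hφ
  rcases eq_or_ne i j with rfl | hij
  · rw [hAlt, sub_self]
  rcases eq_or_ne i o with rfl | hio
  · rw [hAlt, zero_sub, hAlt.neg]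
  rcases eq_or_ne j o with rfl | hjo
  · rw [hAlt, sub_zero]
  have h := apply_single_single_cyclic hφ hij hjo hio.symm
  rw [← hAlt.neg (single i o 1)] at h
  rw [← sub_eq_zero, ← h]
  abel

variable (φ) in
noncomputable def lieFactor (o : ι) : Matrix ι ι R →ₗ[R] X :=
  (stdBasis R ι ι).constr R fun p => φ (single p.1 o 1) (single o p.2 1)

theorem lieFactor_single (o i j : ι) :
    lieFactor φ o (single i j 1) = φ (single i o 1) (single o j 1) := by
  rw [lieFactor, ← stdBasis_eq_single, Module.Basis.constr_basis]

theorem apply_single_single_eq_lieFactor (hφ : ∀ x y, Commute x y → φ x y = 0) (o i j k l : ι) :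
    φ (single i j 1) (single k l 1) =
      lieFactor φ o (single i j 1 * single k l 1 - single k l 1 * single i j 1) := by
  have hAlt := LinearMap.isAlt_of_commute_imp_eq_zero hφ
  rcases eq_or_ne j k with rfl | hjk <;> rcases eq_or_ne l i with rfl | hli
  · simp only [single_mul_single_same, mul_one, map_sub, lieFactor_single]
    exact apply_single_single_transpose hφ l j o
  · simp only [single_mul_single_same, mul_one, single_mul_single_of_ne _ _ _ _ hli, sub_zero,
      lieFactor_single]
    exact apply_single_single_middle hφ hli.symm j o
  · simp only [single_mul_single_same, mul_one, single_mul_single_of_ne _ _ _ _ hjk, zero_sub,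
      map_neg, lieFactor_single]
    rw [← hAlt.neg, apply_single_single_middle hφ hjk.symm l o]
  · simp only [single_mul_single_of_ne _ _ _ _ hjk, single_mul_single_of_ne _ _ _ _ hli, sub_self,
      map_zero]
    exact apply_single_single_of_ne hφ hjk hli

theorem apply_eq_lieFactor_commutator (hφ : ∀ x y, Commute x y → φ x y = 0) (o : ι)
    (x y : Matrix ι ι R) : φ x y = lieFactor φ o (x * y - y * x) := by
  have hφ_eq : φ = (LinearMap.mul R (Matrix ι ι R) - (LinearMap.mul R _).flip).compr₂
      (lieFactor φ o) := by
    refine (stdBasis R ι ι).ext fun ⟨i, j⟩ => (stdBasis R ι ι).ext fun ⟨k, l⟩ => ?_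
    simp only [stdBasis_eq_single, LinearMap.compr₂_apply, LinearMap.sub_apply,
      LinearMap.mul_apply', LinearMap.flip_apply]
    exact apply_single_single_eq_lieFactor hφ o i j k l
  rw [LinearMap.congr_fun₂ hφ_eq x y]
  rfl

end Matrix

/-- The full matrix algebra `M_n(F)`, as a Lie algebra under the commutator
bracket, is zero product determined. -/
theorem matrix_lie_zero_product_determined
    (F : Type*) [Field F] (n : ℕ) (hn : 1 ≤ n)
    (X : Type*) [AddCommGroup X] [Module F X]
    (φ : Matrix (Fin n) (Fin n) F →ₗ[F] Matrix (Fin n) (Fin n) F →ₗ[F] X)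
    (hφ : ∀ x y : Matrix (Fin n) (Fin n) F, x * y - y * x = 0 → φ x y = 0) :
    ∃ f : Matrix (Fin n) (Fin n) F →ₗ[F] X,
      ∀ x y : Matrix (Fin n) (Fin n) F, φ x y = f (x * y - y * x) :=
  ⟨lieFactor φ ⟨0, hn⟩,
    apply_eq_lieFactor_commutator (fun x y h => hφ x y (sub_eq_zero.mpr h)) ⟨0, hn⟩⟩
end

section
/- Let F be a field and n a positive integer. The full matrix algebra M_n(F), considered as an associative algebra under matrix multiplication, is zero product determined: for every F-vector space X and every bilinear map φ : M_n(F) × M_n(F) → X satisfying φ(x,y) = 0 whenever xy = 0, there exists an F-linear map f : M_n(F) → X such that φ(x,y) = f(xy) for all x, y ∈ M_n(F). -/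
/-!
If `φ(x, y)` vanishes whenever `xy = 0` and `e` is idempotent, then `xe · (y - ey) = 0` and
`(x - xe) · ey = 0`, so `φ(xe, y) = φ(xe, ey) = φ(x, ey)`. The elements `a` with
`φ(xa, y) = φ(x, ay)` for all `x, y` form a submodule, so this identity holds on the span of the
idempotents, which for `M_n(F)` is everything: `E_ij = (E_ii + E_ij) - E_ii` for `i ≠ j`.
Then `φ(x, y) = φ(xy, 1)`, and `f = φ(·, 1)` works.
-/

namespace LinearMap

variable {R A X : Type*} [CommSemiring R] [Ring A] [Algebra R A] [AddCommGroup X] [Module R X]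

def balancedSubmodule (φ : A →ₗ[R] A →ₗ[R] X) : Submodule R A where
  carrier := {a | ∀ x y, φ (x * a) y = φ x (a * y)}
  add_mem' {a b} ha hb x y := by
    simp only [mul_add, add_mul, map_add, add_apply, ha x y, hb x y]
  zero_mem' x y := by simp
  smul_mem' c a ha x y := by
    simp only [mul_smul_comm, smul_mul_assoc, map_smul, smul_apply, ha x y]

variable {φ : A →ₗ[R] A →ₗ[R] X}

theorem mem_balancedSubmodule_of_isIdempotentElem (hφ : ∀ x y, x * y = 0 → φ x y = 0)
    {e : A} (he : IsIdempotentElem e) : e ∈ φ.balancedSubmodule := by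
  intro x y
  have hright : φ (x * e) (y - e * y) = 0 :=
    hφ _ _ (by rw [mul_sub, mul_assoc x e (e * y), ← mul_assoc e e y, he.eq, mul_assoc, sub_self])
  have hleft : φ (x - x * e) (e * y) = 0 :=
    hφ _ _ (by rw [sub_mul, mul_assoc x e (e * y), ← mul_assoc e e y, he.eq, sub_self])
  rw [map_sub, sub_eq_zero] at hright
  rw [map_sub, sub_apply, sub_eq_zero] at hleft
  rw [hright, hleft]

theorem span_isIdempotentElem_le_balancedSubmodule (hφ : ∀ x y, x * y = 0 → φ x y = 0) :
    Submodule.span R {e : A | IsIdempotentElem e} ≤ φ.balancedSubmodule :=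
  Submodule.span_le.mpr fun _ => mem_balancedSubmodule_of_isIdempotentElem hφ

theorem eq_flip_one_mul_of_balancedSubmodule_eq_top (hφ : φ.balancedSubmodule = ⊤) (x y : A) :
    φ x y = φ.flip 1 (x * y) := by
  have hy : y ∈ φ.balancedSubmodule := hφ ▸ Submodule.mem_top
  simpa using (hy x 1).symm

theorem exists_eq_comp_mul_of_span_isIdempotentElem_eq_top
    (hA : Submodule.span R {e : A | IsIdempotentElem e} = ⊤)
    (hφ : ∀ x y, x * y = 0 → φ x y = 0) :
    ∃ f : A →ₗ[R] X, ∀ x y, φ x y = f (x * y) :=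
  ⟨φ.flip 1, eq_flip_one_mul_of_balancedSubmodule_eq_top <|
    top_le_iff.mp (hA ▸ span_isIdempotentElem_le_balancedSubmodule hφ)⟩

end LinearMap

namespace Matrix

variable {ι R : Type*} [Fintype ι] [DecidableEq ι] [CommRing R]

theorem isIdempotentElem_single_one (i : ι) : IsIdempotentElem (single i i (1 : R)) := by
  simp [IsIdempotentElem, single_mul_single_same]

theorem isIdempotentElem_single_one_add_single {i j : ι} (hij : i ≠ j) (c : R) :
    IsIdempotentElem (single i i 1 + single i j c) := by
  simp [IsIdempotentElem, add_mul, mul_add, single_mul_single_same, hij.symm]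

theorem single_mem_span_isIdempotentElem (i j : ι) (c : R) :
    single i j c ∈ Submodule.span R {e : Matrix ι ι R | IsIdempotentElem e} := by
  have hii : single i i 1 ∈ Submodule.span R {e : Matrix ι ι R | IsIdempotentElem e} :=
    Submodule.subset_span (isIdempotentElem_single_one i)
  by_cases hij : i = j
  · subst hij
    simpa [smul_single] using Submodule.smul_mem _ c hii
  · rw [← add_sub_cancel_left (single i i 1) (single i j c)]
    exact Submodule.sub_mem _
      (Submodule.subset_span (isIdempotentElem_single_one_add_single hij c)) hii

theorem span_isIdempotentElem_eq_top :
    Submodule.span R {e : Matrix ι ι R | IsIdempotentElem e} = ⊤ := by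
  refine Submodule.eq_top_iff'.mpr fun M => ?_
  induction M using Matrix.induction_on' with
  | h_zero => exact Submodule.zero_mem _
  | h_add p q hp hq => exact Submodule.add_mem _ hp hq
  | h_std_basis i j c => exact single_mem_span_isIdempotentElem i j c

end Matrix

theorem matrix_mul_zero_product_determined_general
    (F : Type*) [Field F] (n : ℕ)
    (X : Type*) [AddCommGroup X] [Module F X]
    (φ : Matrix (Fin n) (Fin n) F →ₗ[F] Matrix (Fin n) (Fin n) F →ₗ[F] X)
    (hφ : ∀ x y : Matrix (Fin n) (Fin n) F, x * y = 0 → φ x y = 0) :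
    ∃ f : Matrix (Fin n) (Fin n) F →ₗ[F] X,
      ∀ x y : Matrix (Fin n) (Fin n) F, φ x y = f (x * y) :=
  LinearMap.exists_eq_comp_mul_of_span_isIdempotentElem_eq_top
    Matrix.span_isIdempotentElem_eq_top hφ

/-- The full matrix algebra `M_n(F)`, as an associative algebra under matrix
multiplication, is zero product determined. -/
theorem matrix_mul_zero_product_determined
    (F : Type*) [Field F] (n : ℕ) (hn : 1 ≤ n)
    (X : Type*) [AddCommGroup X] [Module F X]
    (φ : Matrix (Fin n) (Fin n) F →ₗ[F] Matrix (Fin n) (Fin n) F →ₗ[F] X)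
    (hφ : ∀ x y : Matrix (Fin n) (Fin n) F, x * y = 0 → φ x y = 0) :
    ∃ f : Matrix (Fin n) (Fin n) F →ₗ[F] X,
      ∀ x y : Matrix (Fin n) (Fin n) F, φ x y = f (x * y) :=
  matrix_mul_zero_product_determined_general F n X φ hφ
end

section
/- Let F be a field, n a positive integer, and L an upper triangular k-step ladder on n. Then the ladder matrix algebra M_L, considered under matrix multiplication, is zero product determined: for every F-vector space X and every bilinear map φ : M_L × M_L → X satisfying φ(x,y) = 0 whenever xy = 0, there exists an F-linear map f : M_L → X such that φ(x,y) = f(xy) for all x, y ∈ M_L. -/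
open Matrix

/-!
A bilinear map `φ` on the span `A` of some matrix units that vanishes on pairs with zero
product factors through multiplication in the full matrix algebra. If `e_{im}, e_{ml}` and
`e_{im'}, e_{m'l}` all lie in `A` with `m ≠ m'`, then `(e_{im} - e_{im'}) (e_{ml} + e_{m'l}) = 0`
and `e_{im} e_{m'l} = e_{im'} e_{ml} = 0`, so `φ(e_{im}, e_{ml}) = φ(e_{im'}, e_{m'l})`.
Hence `g(e_{il}) := φ(e_{im}, e_{ml})`, for any such `m`, defines a linear map on all matrices
with `φ(x, y) = g(xy)`, and `f` is the restriction of `g` to `M_L`.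
-/

theorem Submodule.apply_eq_apply_of_mul_eq {R A X : Type*} [CommRing R] [Ring A] [Module R A]
    [AddCommGroup X] [Module R X] {S : Submodule R A} (φ : S →ₗ[R] S →ₗ[R] X)
    (hφ : ∀ x y : S, (x : A) * y = 0 → φ x y = 0) {a a' b b' : S}
    (hab' : (a : A) * b' = 0) (ha'b : (a' : A) * b = 0) (hab : (a : A) * b = a' * b') :
    φ a b = φ a' b' := by
  have hzero : φ (a - a') (b + b') = 0 :=
    hφ _ _ (by simp [sub_mul, mul_add, hab', ha'b, hab])
  simpa [hφ _ _ hab', hφ _ _ ha'b, sub_eq_zero] using hzero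

section MatrixUnitSpan

variable (R : Type*) {ι X : Type*} [CommRing R] [Fintype ι] [DecidableEq ι]
  [AddCommGroup X] [Module R X] (r : ι → ι → Prop)

def matrixUnitSpan : Submodule R (Matrix ι ι R) :=
  Submodule.span R (Set.range fun p : {p : ι × ι // r p.1 p.2} => single p.1.1 p.1.2 (1 : R))

noncomputable def matrixUnitSpanBasis :
    Module.Basis {p : ι × ι // r p.1 p.2} R (matrixUnitSpan R r) :=
  .span <| by
    convert (stdBasis R ι ι).linearIndependent.comp Subtype.val Subtype.val_injective with p
    exact (stdBasis_eq_single R p.1.1 p.1.2).symm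

variable {R r}

@[simp]
theorem coe_matrixUnitSpanBasis (p : {p : ι × ι // r p.1 p.2}) :
    (matrixUnitSpanBasis R r p : Matrix ι ι R) = single p.1.1 p.1.2 1 :=
  congrArg Subtype.val (Module.Basis.span_apply _ p)

theorem apply_matrixUnitSpanBasis_eq {φ : matrixUnitSpan R r →ₗ[R] matrixUnitSpan R r →ₗ[R] X}
    (hφ : ∀ x y : matrixUnitSpan R r, (x : Matrix ι ι R) * y = 0 → φ x y = 0)
    {i l m m' : ι} (him : r i m) (hml : r m l) (him' : r i m') (hm'l : r m' l) :
    φ (matrixUnitSpanBasis R r ⟨(i, m), him⟩) (matrixUnitSpanBasis R r ⟨(m, l), hml⟩) =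
      φ (matrixUnitSpanBasis R r ⟨(i, m'), him'⟩) (matrixUnitSpanBasis R r ⟨(m', l), hm'l⟩) := by
  obtain rfl | hm := eq_or_ne m m'
  · rfl
  · apply Submodule.apply_eq_apply_of_mul_eq φ hφ <;> simp [hm, hm.symm]

theorem exists_linearMap_apply_eq_of_mul_eq_zero {A : Submodule R (Matrix ι ι R)}
    (hA : A = matrixUnitSpan R r) (φ : A →ₗ[R] A →ₗ[R] X)
    (hφ : ∀ x y : A, (x : Matrix ι ι R) * y = 0 → φ x y = 0) :
    ∃ g : Matrix ι ι R →ₗ[R] X, ∀ x y : A, φ x y = g (x * y) := by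
  classical
  subst hA
  set b := matrixUnitSpanBasis R r
  let value : ι × ι → X := fun p =>
    if h : ∃ m, r p.1 m ∧ r m p.2 then φ (b ⟨(p.1, h.choose), h.choose_spec.1⟩)
      (b ⟨(h.choose, p.2), h.choose_spec.2⟩) else 0
  let g := (stdBasis R ι ι).constr R value
  have hg : ∀ i l, g (single i l 1) = value (i, l) := fun i l => by
    rw [← stdBasis_eq_single, Module.Basis.constr_basis]
  suffices φ = ((LinearMap.mul R _).compl₁₂ (Submodule.subtype _) (Submodule.subtype _)).compr₂ g
    from ⟨g, fun x y => by rw [this]; rfl⟩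
  refine LinearMap.ext_basis b b fun p q => ?_
  obtain ⟨⟨i, m⟩, him⟩ := p
  obtain ⟨⟨m', l⟩, hml⟩ := q
  simp only [LinearMap.compr₂_apply, LinearMap.compl₁₂_apply, Submodule.subtype_apply,
    LinearMap.mul_apply', b, coe_matrixUnitSpanBasis]
  obtain rfl | hm := eq_or_ne m m'
  · have h : ∃ m'', r i m'' ∧ r m'' l := ⟨m, him, hml⟩
    rw [single_mul_single_same, one_mul, hg]
    simp only [value, dif_pos h]
    exact apply_matrixUnitSpanBasis_eq hφ _ _ _ _
  · rw [single_mul_single_of_ne (h := hm), map_zero]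
    exact hφ _ _ (by simp [hm])

end MatrixUnitSpan

theorem ladderModuleK_eq_matrixUnitSpan (F : Type*) [Field F] (n k : ℕ) (ii jj : Fin k → ℕ) :
    ladderModuleK F n k ii jj =
      matrixUnitSpan F fun i j : Fin n => ∃ t, (i : ℕ) + 1 ≤ ii t ∧ jj t ≤ (j : ℕ) + 1 := by
  unfold ladderModuleK matrixUnitSpan
  congr 1
  ext A
  constructor
  · rintro ⟨t, i, j, hi, hj, rfl⟩
    exact ⟨⟨(i, j), t, hi, hj⟩, rfl⟩
  · rintro ⟨⟨⟨i, j⟩, t, hi, hj⟩, rfl⟩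
    exact ⟨t, i, j, hi, hj, rfl⟩

theorem ladderModuleK_zero_product_determined_mul_general
    (F : Type*) [Field F] (n k : ℕ) (ii jj : Fin k → ℕ)
    (X : Type*) [AddCommGroup X] [Module F X]
    (φ : ladderModuleK F n k ii jj →ₗ[F] ladderModuleK F n k ii jj →ₗ[F] X)
    (hφ : ∀ x y : ladderModuleK F n k ii jj,
      ((x : Matrix (Fin n) (Fin n) F) * y = 0) → φ x y = 0) :
    ∃ f : ladderModuleK F n k ii jj →ₗ[F] X,
      ∀ x y z : ladderModuleK F n k ii jj,
        (z : Matrix (Fin n) (Fin n) F) = (x : Matrix (Fin n) (Fin n) F) * y →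
          φ x y = f z := by
  obtain ⟨g, hg⟩ :=
    exists_linearMap_apply_eq_of_mul_eq_zero (ladderModuleK_eq_matrixUnitSpan F n k ii jj) φ hφ
  exact ⟨g ∘ₗ Submodule.subtype _, fun x y z hz => by simp [hg, hz]⟩

/-- The matrix algebra on an upper triangular `k`-step ladder is zero product
determined under matrix multiplication. -/
theorem ladderModuleK_zero_product_determined_mul
    (F : Type*) [Field F] (n k : ℕ) (hn : 1 ≤ n) (ii jj : Fin k → ℕ)
    (hiimono : StrictMono ii) (hjjmono : StrictMono jj)
    (hii1 : ∀ t, 1 ≤ ii t) (hiin : ∀ t, ii t ≤ n)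
    (hjj1 : ∀ t, 1 ≤ jj t) (hjjn : ∀ t, jj t ≤ n)
    (hut : ∀ s t : Fin k, (s : ℕ) + 1 = (t : ℕ) → ii s < jj t)
    (X : Type*) [AddCommGroup X] [Module F X]
    (φ : ladderModuleK F n k ii jj →ₗ[F] ladderModuleK F n k ii jj →ₗ[F] X)
    (hφ : ∀ x y : ladderModuleK F n k ii jj,
      ((x : Matrix (Fin n) (Fin n) F) * y = 0) → φ x y = 0) :
    ∃ f : ladderModuleK F n k ii jj →ₗ[F] X,
      ∀ x y z : ladderModuleK F n k ii jj,
        (z : Matrix (Fin n) (Fin n) F) = (x : Matrix (Fin n) (Fin n) F) * y →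
          φ x y = f z :=
  ladderModuleK_zero_product_determined_mul_general F n k ii jj X φ hφ
end

section
/- Let F be a field, n a positive integer, and L = {(i₁, j₁)} a 1-step ladder on n with i₁ ≥ j₁. Set n₁ = j₁ - 1, n₂ = i₁ - j₁ + 1, n₃ = n - i₁. Let μ : M_L ⊗_F M_L → M_L be the linear map induced by (x,y) ↦ [x,y] = xy - yx. Then the image of μ (the derived subalgebra [M_L, M_L]) has dimension n₂² - 1 + n₁n₂ + n₂n₃ + n₁n₃ over F. -/
/-!
Fix a diagonal position `d` inside the rectangle of `M_L`; it exists because `i₁ ≥ j₁`. Every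
matrix unit `e_{ij}` of `M_L` with `i ≠ j` is the commutator `[e_{id}, e_{dj}]`, and each
`e_{ii} - e_{dd}` is `[e_{id}, e_{di}]`. Hence the derived algebra is exactly the trace-zero part
of `M_L`, which has codimension one in the `i₁ (n - j₁ + 1)`-dimensional space `M_L`.
-/

open Matrix TensorProduct

open Finset Module

namespace Matrix

section Semiring

variable {ι R : Type*} [Semiring R]

variable (R) in
def rectSubmodule (r c : Finset ι) : Submodule R (Matrix ι ι R) where
  carrier := {A | ∀ i j, A i j ≠ 0 → i ∈ r ∧ j ∈ c}
  add_mem' {A B} hA hB i j h := by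
    by_cases hAij : A i j = 0
    · exact hB i j (by simpa [hAij] using h)
    · exact hA i j hAij
  zero_mem' i j h := absurd rfl h
  smul_mem' a A hA i j h := hA i j (right_ne_zero_of_mul h)

variable {r c : Finset ι} [DecidableEq ι]

theorem single_mem_rectSubmodule {i j : ι} (hi : i ∈ r) (hj : j ∈ c) (a : R) :
    single i j a ∈ rectSubmodule R r c := by
  intro i' j' h
  simp only [single_apply, ne_eq, ite_eq_right_iff, not_forall] at h
  obtain ⟨⟨rfl, rfl⟩, -⟩ := h
  exact ⟨hi, hj⟩

theorem span_single_eq_rectSubmodule [Fintype ι] :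
    Submodule.span R {A | ∃ i j, i ∈ r ∧ j ∈ c ∧ A = single i j 1} = rectSubmodule R r c := by
  refine le_antisymm (Submodule.span_le.2 ?_) fun x hx => ?_
  · rintro _ ⟨i, j, hi, hj, rfl⟩
    exact single_mem_rectSubmodule hi hj 1
  · rw [matrix_eq_sum_single x]
    refine Submodule.sum_mem _ fun i _ => Submodule.sum_mem _ fun j _ => ?_
    by_cases h : x i j = 0
    · simp [h]
    · obtain ⟨hi, hj⟩ := hx i j h
      rw [← mul_one (x i j), ← smul_eq_mul, ← smul_single]
      exact Submodule.smul_mem _ _ (Submodule.subset_span ⟨i, j, hi, hj, rfl⟩)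

end Semiring

section Ring

variable {ι R : Type*} [Fintype ι] [DecidableEq ι] [Ring R]

theorem single_one_commutator_single_one (i d j : ι) :
    single i d (1 : R) * single d j 1 - single d j 1 * single i d 1 =
      single i j 1 - if i = j then single d d 1 else 0 := by
  by_cases h : j = i
  · subst h; simp
  · simp [h, Ne.symm h]

theorem eq_sum_smul_commutator_of_trace_eq_zero {x : Matrix ι ι R} (hx : trace x = 0) (d : ι) :
    x = ∑ i, ∑ j, x i j • (single i d 1 * single d j 1 - single d j 1 * single i d 1) := by
  have hdiag : ∑ i, single d d (x i i) = single d d (trace x) :=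
    (map_sum (singleAddMonoidHom d d : R →+ Matrix ι ι R) _ _).symm
  simp only [single_one_commutator_single_one, smul_sub, smul_ite, smul_zero, sum_sub_distrib,
    sum_ite_eq, mem_univ, if_true, smul_single, smul_eq_mul, mul_one, ← matrix_eq_sum_single]
  simp [hdiag, hx]

theorem mem_of_commutator_mem_of_trace_eq_zero {r c : Finset ι} {W : Submodule R (Matrix ι ι R)}
    {d : ι} (hdr : d ∈ r) (hdc : d ∈ c)
    (hW : ∀ a ∈ rectSubmodule R r c, ∀ b ∈ rectSubmodule R r c, a * b - b * a ∈ W)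
    {x : Matrix ι ι R} (hx : x ∈ rectSubmodule R r c) (htr : trace x = 0) : x ∈ W := by
  rw [eq_sum_smul_commutator_of_trace_eq_zero htr d]
  refine Submodule.sum_mem _ fun i _ => Submodule.sum_mem _ fun j _ => ?_
  by_cases h : x i j = 0
  · simp [h]
  · obtain ⟨hi, hj⟩ := hx i j h
    exact W.smul_mem _ <|
      hW _ (single_mem_rectSubmodule hi hdc 1) _ (single_mem_rectSubmodule hdr hj 1)

end Ring

section CommRing

variable {ι R : Type*} [Fintype ι] [DecidableEq ι] [CommRing R] {r c : Finset ι}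
  {V : Submodule R (Matrix ι ι R)}

theorem range_eq_ker_trace_of_commutator (hV : V = rectSubmodule R r c) (hrc : (r ∩ c).Nonempty)
    (μ : V ⊗[R] V →ₗ[R] V) (hμ : ∀ x y : V, (μ (x ⊗ₜ y) : Matrix ι ι R) = x * y - y * x) :
    LinearMap.range μ = LinearMap.ker (traceLinearMap ι R R ∘ₗ V.subtype) := by
  obtain ⟨d, hd⟩ := hrc
  obtain ⟨hdr, hdc⟩ := mem_inter.1 hd
  refine le_antisymm (LinearMap.range_le_ker_iff.2 (TensorProduct.ext' fun x y => ?_))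
    fun x hx => ?_
  · simpa [hμ, sub_eq_zero] using trace_mul_comm (x : Matrix ι ι R) y
  · have hW : (x : Matrix ι ι R) ∈ (LinearMap.range μ).map V.subtype :=
      mem_of_commutator_mem_of_trace_eq_zero hdr hdc (fun a ha b hb => Submodule.mem_map.2
        ⟨μ (⟨a, hV ▸ ha⟩ ⊗ₜ ⟨b, hV ▸ hb⟩), LinearMap.mem_range_self _ _, hμ _ _⟩) (hV ▸ x.2) hx
    simpa using hW

end CommRing

section Field

variable {ι F : Type*} [Fintype ι] [DecidableEq ι] [Field F] {r c : Finset ι}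

theorem finrank_rectSubmodule : finrank F (rectSubmodule F r c) = #r * #c := by
  have hrange : Set.range (stdBasis F ι ι ∘ ((↑) : ↥(r ×ˢ c) → ι × ι)) =
      {A | ∃ i j, i ∈ r ∧ j ∈ c ∧ A = single i j 1} := by
    ext A
    simp [stdBasis_eq_single, eq_comm, and_assoc]
  rw [← span_single_eq_rectSubmodule, ← hrange, finrank_span_eq_card
    ((stdBasis F ι ι).linearIndependent.comp _ Subtype.val_injective), Fintype.card_coe,
    card_product]

theorem finrank_range_add_one_of_commutator {V : Submodule F (Matrix ι ι F)}
    (hV : V = rectSubmodule F r c) (hrc : (r ∩ c).Nonempty)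
    (μ : V ⊗[F] V →ₗ[F] V) (hμ : ∀ x y : V, (μ (x ⊗ₜ y) : Matrix ι ι F) = x * y - y * x) :
    finrank F (LinearMap.range μ) + 1 = #r * #c := by
  rw [range_eq_ker_trace_of_commutator hV hrc μ hμ]
  subst hV
  obtain ⟨d, hd⟩ := hrc
  obtain ⟨hdr, hdc⟩ := mem_inter.1 hd
  set trace' := traceLinearMap ι F F ∘ₗ (rectSubmodule F r c).subtype
  have htrace_surj : LinearMap.range trace' = ⊤ :=
    LinearMap.range_eq_top.2 fun a =>
      ⟨⟨single d d a, single_mem_rectSubmodule hdr hdc a⟩, trace_single_eq_same d a⟩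
  rw [← finrank_rectSubmodule (F := F), ← trace'.finrank_range_add_finrank_ker, htrace_surj,
    finrank_top, finrank_self, add_comm]

end Field

end Matrix

theorem Fin.card_filter_val_add_one_le {n m : ℕ} (h : m ≤ n) :
    #{i : Fin n | (i : ℕ) + 1 ≤ m} = m := by
  simp [Fin.card_filter_val_lt, h]

-- The truncated subtraction `m - 1` makes this correct for `m = 0` as well.
theorem Fin.card_filter_le_val_add_one {n m : ℕ} :
    #{j : Fin n | m ≤ (j : ℕ) + 1} = n - (m - 1) := by
  have hsplit :=
    card_filter_add_card_filter_not (s := univ) (p := fun j : Fin n => (j : ℕ) < m - 1)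
  rw [Fin.card_filter_val_lt, card_univ, Fintype.card_fin] at hsplit
  have hnot : #{j : Fin n | m ≤ (j : ℕ) + 1} = #{j : Fin n | ¬(j : ℕ) < m - 1} := by
    congr 1; ext; simp
  omega

theorem ladderModule_eq_rectSubmodule (F : Type*) [Field F] (n i₁ j₁ : ℕ) :
    ladderModule F n i₁ j₁ =
      rectSubmodule F {i : Fin n | (i : ℕ) + 1 ≤ i₁} {j | j₁ ≤ (j : ℕ) + 1} := by
  rw [← span_single_eq_rectSubmodule]
  simp [ladderModule]

theorem range_bracket_ladderModule_finrank_general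
    (F : Type*) [Field F] (n i₁ j₁ : ℕ) (hij : j₁ ≤ i₁)
    (n₁ n₂ n₃ : ℕ) (hn₁ : n₁ + 1 = j₁) (hn₂ : n₂ + j₁ = i₁ + 1) (hn₃ : n₃ + i₁ = n)
    (μ : ladderModule F n i₁ j₁ ⊗[F] ladderModule F n i₁ j₁ →ₗ[F] ladderModule F n i₁ j₁)
    (hμ : ∀ x y : ladderModule F n i₁ j₁,
      ((μ (x ⊗ₜ y) : Matrix (Fin n) (Fin n) F)) =
        (x : Matrix (Fin n) (Fin n) F) * y - (y : Matrix (Fin n) (Fin n) F) * x) :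
    (Module.finrank F ↥(LinearMap.range μ) : ℤ) =
      (n₂ : ℤ) ^ 2 - 1 + n₁ * n₂ + n₂ * n₃ + n₁ * n₃ := by
  have hdim := finrank_range_add_one_of_commutator (ladderModule_eq_rectSubmodule F n i₁ j₁)
    ⟨⟨n₁, by omega⟩, by simp; omega⟩ μ hμ
  have hcard : i₁ * (n - (j₁ - 1)) = (n₁ + n₂) * (n₂ + n₃) := by
    rw [show i₁ = n₁ + n₂ by omega, show n - (j₁ - 1) = n₂ + n₃ by omega]
  rw [Fin.card_filter_val_add_one_le (by omega), Fin.card_filter_le_val_add_one, hcard] at hdim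
  have hdimℤ := congrArg (Nat.cast : ℕ → ℤ) hdim
  push_cast at hdimℤ
  linear_combination hdimℤ

/-- The dimension of the image of the bracket-induced map `μ : M_L ⊗ M_L → M_L`
(the derived subalgebra `[M_L, M_L]`) for a one-step ladder with `i₁ ≥ j₁`, where
`n₁ = j₁ - 1`, `n₂ = i₁ - j₁ + 1`, `n₃ = n - i₁`, equals `n₂² - 1 + n₁n₂ + n₂n₃ + n₁n₃`. -/
theorem range_bracket_ladderModule_finrank
    (F : Type*) [Field F] (n i₁ j₁ : ℕ) (hn : 1 ≤ n)
    (hi₁ : 1 ≤ i₁) (hi₁n : i₁ ≤ n) (hj₁ : 1 ≤ j₁) (hj₁n : j₁ ≤ n) (hij : j₁ ≤ i₁)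
    (n₁ n₂ n₃ : ℕ) (hn₁ : n₁ + 1 = j₁) (hn₂ : n₂ + j₁ = i₁ + 1) (hn₃ : n₃ + i₁ = n)
    (μ : ladderModule F n i₁ j₁ ⊗[F] ladderModule F n i₁ j₁ →ₗ[F] ladderModule F n i₁ j₁)
    (hμ : ∀ x y : ladderModule F n i₁ j₁,
      ((μ (x ⊗ₜ y) : Matrix (Fin n) (Fin n) F)) =
        (x : Matrix (Fin n) (Fin n) F) * y - (y : Matrix (Fin n) (Fin n) F) * x) :
    (Module.finrank F ↥(LinearMap.range μ) : ℤ) =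
      (n₂ : ℤ) ^ 2 - 1 + n₁ * n₂ + n₂ * n₃ + n₁ * n₃ :=
  range_bracket_ladderModule_finrank_general F n i₁ j₁ hij n₁ n₂ n₃ hn₁ hn₂ hn₃ μ hμ
end

section
/- Let F be a field and let n₁ ≥ 0, n₂ ≥ 1, n₃ ≥ 0 be integers with n = n₁ + n₂ + n₃. In M_n(F), for indices i, j, l ∈ (n₁, n₁+n₂] and q ∈ (n₁+n₂, n], the following elements of M_n(F) ⊗_F M_n(F) all lie in the kernel of the linear map induced by the commutator bracket: (i) e_{i,j} ⊗ e_{l,q} and e_{l,q} ⊗ e_{i,j} whenever j ≠ l; (ii) (e_{i,j} - e_{i,j+1}) ⊗ (e_{j,q} + e_{j+1,q}) and (e_{j,q} + e_{j+1,q}) ⊗ (e_{i,j} - e_{i,j+1}) whenever j ≤ n₁+n₂-1; (iii) (e_{i,i} + e_{i,q}) ⊗ (e_{i,i} + e_{i,q}). Moreover, the collection of all tensors listed in (i), (ii), and (iii) is linearly independent over F. -/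
open Matrix TensorProduct

/-! Each listed tensor `x ⊗ y` has commuting factors, hence lies in the kernel.
For independence, give every tensor a leading coordinate in the basis `e_{a,b} ⊗ e_{c,d}`,
namely `(i,j,l,q)`, `(l,q,i,j)`, `(i,j,j,q)`, `(j,q,i,j)` and `(i,q,i,q)` in the five cases,
where its coefficient is `1`. A leading coordinate of type (ii) at `j` is also hit by the
tensor at `j - 1`, and those of type (i) by tensors of type (ii); with the rank `0` on (iii),
`j + 1` on (ii) and `n₁ + n₂` on (i), a leading coordinate vanishes on every other tensor of
rank at least its own, and such a triangular family is linearly independent. -/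

/-- Index data for the tensors `e_{i,j} ⊗ e_{l,q}` (and their swaps) with
`i, j, l` in the middle block `(n₁, n₁+n₂]` (1-based), `q` in the last block
`(n₁+n₂, n]`, and `j ≠ l`.  Indices here are 0-based `Fin` indices. -/
structure IdxT (n₁ n₂ n₃ : ℕ) where
  i : Fin (n₁ + n₂ + n₃)
  j : Fin (n₁ + n₂ + n₃)
  l : Fin (n₁ + n₂ + n₃)
  q : Fin (n₁ + n₂ + n₃)
  hi : n₁ ≤ (i : ℕ) ∧ (i : ℕ) < n₁ + n₂
  hj : n₁ ≤ (j : ℕ) ∧ (j : ℕ) < n₁ + n₂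
  hl : n₁ ≤ (l : ℕ) ∧ (l : ℕ) < n₁ + n₂
  hq : n₁ + n₂ ≤ (q : ℕ)
  hjl : j ≠ l

/-- Index data for the tensors `(e_{i,j} - e_{i,j+1}) ⊗ (e_{j,q} + e_{j+1,q})`
(and their swaps) with `i, j, j+1` in the middle block and `q` in the last block;
`j'` records the successor index `j + 1`. -/
structure IdxS (n₁ n₂ n₃ : ℕ) where
  i : Fin (n₁ + n₂ + n₃)
  j : Fin (n₁ + n₂ + n₃)
  j' : Fin (n₁ + n₂ + n₃)
  q : Fin (n₁ + n₂ + n₃)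
  hi : n₁ ≤ (i : ℕ) ∧ (i : ℕ) < n₁ + n₂
  hj : n₁ ≤ (j : ℕ) ∧ (j : ℕ) + 1 < n₁ + n₂
  hj' : (j' : ℕ) = (j : ℕ) + 1
  hq : n₁ + n₂ ≤ (q : ℕ)

/-- Index data for the tensors `(e_{i,i} + e_{i,q}) ⊗ (e_{i,i} + e_{i,q})` with `i`
in the middle block and `q` in the last block. -/
structure IdxR (n₁ n₂ n₃ : ℕ) where
  i : Fin (n₁ + n₂ + n₃)
  q : Fin (n₁ + n₂ + n₃)
  hi : n₁ ≤ (i : ℕ) ∧ (i : ℕ) < n₁ + n₂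
  hq : n₁ + n₂ ≤ (q : ℕ)

/-- The family of tensors listed in (i), (ii), (iii). -/
noncomputable def tensorFamily (F : Type*) [Field F] (n₁ n₂ n₃ : ℕ) :
    (IdxT n₁ n₂ n₃ ⊕ IdxT n₁ n₂ n₃) ⊕ (IdxS n₁ n₂ n₃ ⊕ IdxS n₁ n₂ n₃) ⊕ IdxR n₁ n₂ n₃ →
      Matrix (Fin (n₁ + n₂ + n₃)) (Fin (n₁ + n₂ + n₃)) F ⊗[F]
        Matrix (Fin (n₁ + n₂ + n₃)) (Fin (n₁ + n₂ + n₃)) F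
  | Sum.inl (Sum.inl t) => Matrix.single t.i t.j 1 ⊗ₜ Matrix.single t.l t.q 1
  | Sum.inl (Sum.inr t) => Matrix.single t.l t.q 1 ⊗ₜ Matrix.single t.i t.j 1
  | Sum.inr (Sum.inl (Sum.inl s)) =>
      (Matrix.single s.i s.j 1 - Matrix.single s.i s.j' 1) ⊗ₜ
        (Matrix.single s.j s.q 1 + Matrix.single s.j' s.q 1)
  | Sum.inr (Sum.inl (Sum.inr s)) =>
      (Matrix.single s.j s.q 1 + Matrix.single s.j' s.q 1) ⊗ₜ
        (Matrix.single s.i s.j 1 - Matrix.single s.i s.j' 1)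
  | Sum.inr (Sum.inr r) =>
      (Matrix.single r.i r.i 1 + Matrix.single r.i r.q 1) ⊗ₜ
        (Matrix.single r.i r.i 1 + Matrix.single r.i r.q 1)

theorem linearIndependent_of_triangular {ι R M : Type*} [Ring R] [NoZeroDivisors R]
    [AddCommGroup M] [Module R M] {v : ι → M} (φ : ι → M →ₗ[R] R) (rank : ι → ℕ)
    (hdiag : ∀ i, φ i (v i) ≠ 0)
    (htri : ∀ i i', rank i ≤ rank i' → i' ≠ i → φ i (v i') = 0) :
    LinearIndependent R v := by
  classical
  rw [linearIndependent_iff']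
  intro s g hg i
  induction hr : rank i using Nat.strong_induction_on generalizing i with
  | _ r ih =>
    intro hi
    have hφ : ∑ i' ∈ s, g i' * φ i (v i') = 0 := by
      simpa only [map_sum, map_smul, smul_eq_mul, map_zero] using congrArg (φ i) hg
    rw [Finset.sum_eq_single_of_mem i hi fun i' hi' hne => ?_] at hφ
    · exact (mul_eq_zero.mp hφ).resolve_right (hdiag i)
    · rcases lt_or_ge (rank i') r with hlt | hge
      · rw [ih _ hlt i' rfl hi', zero_mul]
      · rw [htri i i' (hr ▸ hge) hne, mul_zero]

namespace Matrix

variable {n α : Type*} [DecidableEq n] [Fintype n] [Ring α]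

theorem commute_single_single_of_ne_s14 {a b c d : n} (hbc : b ≠ c) (hda : d ≠ a) (x y : α) :
    Commute (single a b x) (single c d y) := by
  simp [Commute, SemiconjBy, single_mul_single_of_ne, hbc, hda]

theorem commute_single_sub_single_single_add_single {i j j' q : n} (hjj' : j ≠ j') (hqi : q ≠ i)
    (x y : α) :
    Commute (single i j x - single i j' x) (single j q y + single j' q y) := by
  simp [Commute, SemiconjBy, sub_mul, mul_sub, mul_add, add_mul, single_mul_single_of_ne, hjj',
    hjj'.symm, hqi]

end Matrix

noncomputable abbrev matrixUnitTensorBasis (R n : Type*) [CommRing R] [Fintype n] [DecidableEq n] :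
    Module.Basis ((n × n) × (n × n)) R (Matrix n n R ⊗[R] Matrix n n R) :=
  (stdBasis R n n).tensorProduct (stdBasis R n n)

theorem matrixUnitTensorBasis_apply {R n : Type*} [CommRing R] [Fintype n] [DecidableEq n]
    (a b c d : n) :
    matrixUnitTensorBasis R n ((a, b), (c, d)) = single a b 1 ⊗ₜ single c d 1 := by
  rw [Module.Basis.tensorProduct_apply, stdBasis_eq_single, stdBasis_eq_single]

section TensorFamily

variable {n₁ n₂ n₃ : ℕ}

theorem IdxT.q_ne_i (t : IdxT n₁ n₂ n₃) : t.q ≠ t.i :=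
  Fin.ne_of_val_ne (by have := t.hi; have := t.hq; omega)

theorem IdxS.q_ne_i (s : IdxS n₁ n₂ n₃) : s.q ≠ s.i :=
  Fin.ne_of_val_ne (by have := s.hi; have := s.hq; omega)

theorem IdxS.j_ne_j' (s : IdxS n₁ n₂ n₃) : s.j ≠ s.j' :=
  Fin.ne_of_val_ne (by have := s.hj'; omega)

abbrev TensorFamilyIdx (n₁ n₂ n₃ : ℕ) :=
  (IdxT n₁ n₂ n₃ ⊕ IdxT n₁ n₂ n₃) ⊕ (IdxS n₁ n₂ n₃ ⊕ IdxS n₁ n₂ n₃) ⊕ IdxR n₁ n₂ n₃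

def tensorFamilyLead :
    TensorFamilyIdx n₁ n₂ n₃ →
      (Fin (n₁ + n₂ + n₃) × Fin (n₁ + n₂ + n₃)) × (Fin (n₁ + n₂ + n₃) × Fin (n₁ + n₂ + n₃))
  | .inl (.inl t) => ((t.i, t.j), (t.l, t.q))
  | .inl (.inr t) => ((t.l, t.q), (t.i, t.j))
  | .inr (.inl (.inl s)) => ((s.i, s.j), (s.j, s.q))
  | .inr (.inl (.inr s)) => ((s.j, s.q), (s.i, s.j))
  | .inr (.inr r) => ((r.i, r.q), (r.i, r.q))

def tensorFamilyRank : TensorFamilyIdx n₁ n₂ n₃ → ℕ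
  | .inl _ => n₁ + n₂
  | .inr (.inl (.inl s)) => s.j + 1
  | .inr (.inl (.inr s)) => s.j + 1
  | .inr (.inr _) => 0

variable (F : Type*) [Field F]

theorem tensorFamily_mem_ker
    (μ : Matrix (Fin (n₁ + n₂ + n₃)) (Fin (n₁ + n₂ + n₃)) F ⊗[F]
          Matrix (Fin (n₁ + n₂ + n₃)) (Fin (n₁ + n₂ + n₃)) F
        →ₗ[F] Matrix (Fin (n₁ + n₂ + n₃)) (Fin (n₁ + n₂ + n₃)) F)
    (hμ : ∀ x y, μ (x ⊗ₜ y) = x * y - y * x) (k : TensorFamilyIdx n₁ n₂ n₃) :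
    μ (tensorFamily F n₁ n₂ n₃ k) = 0 := by
  have tmul_eq_zero {x y} (h : Commute x y) : μ (x ⊗ₜ y) = 0 := by rw [hμ, h.eq, sub_self]
  rcases k with (t | t) | (s | s) | r
  · exact tmul_eq_zero (commute_single_single_of_ne_s14 t.hjl t.q_ne_i 1 1)
  · exact tmul_eq_zero (commute_single_single_of_ne_s14 t.hjl t.q_ne_i 1 1).symm
  · exact tmul_eq_zero (commute_single_sub_single_single_add_single s.j_ne_j' s.q_ne_i 1 1)
  · exact tmul_eq_zero (commute_single_sub_single_single_add_single s.j_ne_j' s.q_ne_i 1 1).symm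
  · exact tmul_eq_zero (Commute.refl _)

theorem tensorFamily_coord_lead_self (k : TensorFamilyIdx n₁ n₂ n₃) :
    (matrixUnitTensorBasis F _).coord (tensorFamilyLead k) (tensorFamily F n₁ n₂ n₃ k) = 1 := by
  rcases k with (⟨_, _, _, _, _, _, _, _, _⟩ | ⟨_, _, _, _, _, _, _, _, _⟩) |
    (⟨_, _, _, _, _, _, _, _⟩ | ⟨_, _, _, _, _, _, _, _⟩) | ⟨_, _, _, _⟩ <;>
  simp only [tensorFamily, tensorFamilyLead, sub_tmul, tmul_sub, add_tmul, tmul_add,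
    ← matrixUnitTensorBasis_apply, map_add, map_sub, Module.Basis.coord_apply,
    Module.Basis.repr_self, Finsupp.single_apply, Prod.mk.injEq, Fin.ext_iff] <;>
  split_ifs <;> first | omega | norm_num

theorem tensorFamily_coord_lead_eq_zero {k k' : TensorFamilyIdx n₁ n₂ n₃}
    (hrank : tensorFamilyRank k ≤ tensorFamilyRank k') (hne : k' ≠ k) :
    (matrixUnitTensorBasis F _).coord (tensorFamilyLead k) (tensorFamily F n₁ n₂ n₃ k') = 0 := by
  rcases k with (⟨_, _, _, _, _, _, _, _, _⟩ | ⟨_, _, _, _, _, _, _, _, _⟩) |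
    (⟨_, _, _, _, _, _, _, _⟩ | ⟨_, _, _, _, _, _, _, _⟩) | ⟨_, _, _, _⟩ <;>
  rcases k' with (⟨_, _, _, _, _, _, _, _, _⟩ | ⟨_, _, _, _, _, _, _, _, _⟩) |
    (⟨_, _, _, _, _, _, _, _⟩ | ⟨_, _, _, _, _, _, _, _⟩) | ⟨_, _, _, _⟩ <;>
  simp only [tensorFamily, tensorFamilyLead, tensorFamilyRank, sub_tmul, tmul_sub, add_tmul,
    tmul_add, ← matrixUnitTensorBasis_apply, map_add, map_sub, Module.Basis.coord_apply,
    Module.Basis.repr_self, Finsupp.single_apply, Prod.mk.injEq, Fin.ext_iff, ne_eq,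
    Sum.inl.injEq, Sum.inr.injEq, reduceCtorEq, IdxT.mk.injEq, IdxS.mk.injEq,
    IdxR.mk.injEq] at hrank hne ⊢ <;>
  split_ifs <;> first | omega | norm_num

end TensorFamily

theorem tensorFamily_mem_ker_and_linearIndependent_general
    (F : Type*) [Field F] (n₁ n₂ n₃ : ℕ)
    (μ : Matrix (Fin (n₁ + n₂ + n₃)) (Fin (n₁ + n₂ + n₃)) F ⊗[F]
          Matrix (Fin (n₁ + n₂ + n₃)) (Fin (n₁ + n₂ + n₃)) F
        →ₗ[F] Matrix (Fin (n₁ + n₂ + n₃)) (Fin (n₁ + n₂ + n₃)) F)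
    (hμ : ∀ x y : Matrix (Fin (n₁ + n₂ + n₃)) (Fin (n₁ + n₂ + n₃)) F,
      μ (x ⊗ₜ y) = x * y - y * x) :
    (∀ idx, μ (tensorFamily F n₁ n₂ n₃ idx) = 0)
      ∧ LinearIndependent F (tensorFamily F n₁ n₂ n₃) :=
  ⟨tensorFamily_mem_ker F μ hμ,
    linearIndependent_of_triangular
      (fun k => (matrixUnitTensorBasis F _).coord (tensorFamilyLead k)) tensorFamilyRank
      (fun k => by rw [tensorFamily_coord_lead_self]; exact one_ne_zero)
      fun _ _ hrank hne => tensorFamily_coord_lead_eq_zero F hrank hne⟩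

/-- All the tensors in the family lie in the kernel of the map induced by the
commutator bracket, and the family is linearly independent. -/
theorem tensorFamily_mem_ker_and_linearIndependent
    (F : Type*) [Field F] (n₁ n₂ n₃ : ℕ) (hn₂ : 1 ≤ n₂)
    (μ : Matrix (Fin (n₁ + n₂ + n₃)) (Fin (n₁ + n₂ + n₃)) F ⊗[F]
          Matrix (Fin (n₁ + n₂ + n₃)) (Fin (n₁ + n₂ + n₃)) F
        →ₗ[F] Matrix (Fin (n₁ + n₂ + n₃)) (Fin (n₁ + n₂ + n₃)) F)
    (hμ : ∀ x y : Matrix (Fin (n₁ + n₂ + n₃)) (Fin (n₁ + n₂ + n₃)) F,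
      μ (x ⊗ₜ y) = x * y - y * x) :
    (∀ idx, μ (tensorFamily F n₁ n₂ n₃ idx) = 0)
      ∧ LinearIndependent F (tensorFamily F n₁ n₂ n₃) :=
  tensorFamily_mem_ker_and_linearIndependent_general F n₁ n₂ n₃ μ hμ
end
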